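/- arXiv:2305.07459 — 3 statements merged into one kernel-verified Lean document; each statement's English description precedes it below -/
import Mathlib

section
/- Let D ⊂ ℝ³ be a bounded domain, 0 ≤ t_min < t_max, K > 0, x̂ ∈ S², and L as the operator (Lu)(τ) = ∫_{t_min}^{t_max} ∫_D e^{−iτ(x̂·y − t)} u(y,t) dy dt from L²(D × (t_min, t_max)) to L²(0,K). Then L has dense range in L²(0,K). -/
/-!
`L` has dense range iff `L*` is injective. By Fubini, `L* φ` is the function
`(y, t) ↦ Φ (x̂ ⬝ y - t)`, where `Φ z = ∫₀ᴷ e^{iτz} φ(τ) dτ` is entire because `φ` has compact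
support. If `L* φ = 0`, then `Φ` vanishes on the interval `x̂ ⬝ y₀ - (t_min, t_max)` for any
`y₀ ∈ D`, hence everywhere by the identity theorem. On the real line `Φ` is, after rescaling, the
Fourier transform of the zero extension of `φ`, and the Fourier transform is injective on `L¹`.
-/

open MeasureTheory Complex
open scoped RealInnerProductSpace

noncomputable section

/-- Points of `ℝ³`. -/
abbrev E3 := EuclideanSpace ℝ (Fin 3)

/-- The kernel `e^{-iτξ}`. -/
def phase (τ ξ : ℝ) : ℂ := Complex.exp (-Complex.I * τ * ξ)

open Filter Topology FourierTransform
open scoped InnerProduct ComplexConjugate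

theorem ContinuousLinearMap.denseRange_of_ker_adjoint_eq_bot {𝕜 E F : Type*} [RCLike 𝕜]
    [NormedAddCommGroup E] [InnerProductSpace 𝕜 E] [CompleteSpace E]
    [NormedAddCommGroup F] [InnerProductSpace 𝕜 F] [CompleteSpace F]
    (T : E →L[𝕜] F) (h : (T†).ker = ⊥) : DenseRange T := by
  have : T.rangeᗮ = ⊥ := by rw [T.orthogonal_range]; exact h
  rwa [← Submodule.topologicalClosure_eq_top_iff, ← Submodule.dense_iff_topologicalClosure_eq_top,
    LinearMap.coe_range, ContinuousLinearMap.coe_coe] at this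

theorem ContinuousLinearMap.adjoint_apply_eq_toLp_of_kernel {X Y : Type*} [MeasurableSpace X]
    [MeasurableSpace Y] {μ : Measure X} {ν : Measure Y} [IsFiniteMeasure μ] [IsFiniteMeasure ν]
    (T : Lp ℂ 2 μ →L[ℂ] Lp ℂ 2 ν) {k : Y → X → ℂ} {C : ℝ}
    (hk : AEStronglyMeasurable (Function.uncurry k) (ν.prod μ)) (hkC : ∀ y x, ‖k y x‖ ≤ C)
    (hT : ∀ u, ∀ᵐ y ∂ν, T u y = ∫ x, k y x * u x ∂μ) (φ : Lp ℂ 2 ν) {g : X → ℂ}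
    (hg : MemLp g 2 μ) (hgk : ∀ᵐ x ∂μ, g x = ∫ y, conj (k y x) * φ y ∂ν) :
    (T†) φ = hg.toLp g := by
  refine ext_inner_left ℂ fun u => ?_
  have hu : Integrable (fun x => conj (u x)) μ :=
    ((Lp.memLp u).integrable one_le_two).norm.mono' (by fun_prop) (by simp)
  have hφ : Integrable φ ν := (Lp.memLp φ).integrable one_le_two
  have hint : Integrable (fun p : Y × X => conj (k p.1 p.2) * (φ p.1 * conj (u p.2)))
      (ν.prod μ) :=
    (hφ.mul_prod hu).bdd_mul (c := C) (by fun_prop)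
      (Eventually.of_forall fun p => by simpa using hkC p.1 p.2)
  rw [adjoint_inner_right, L2.inner_def, L2.inner_def]
  calc ∫ y, inner ℂ (T u y) (φ y) ∂ν
      = ∫ y, ∫ x, conj (k y x) * (φ y * conj (u x)) ∂μ ∂ν := by
        refine integral_congr_ae ?_
        filter_upwards [hT u] with y hy
        rw [RCLike.inner_apply, hy, ← integral_conj, ← integral_const_mul]
        congr 1 with x
        simp only [map_mul]
        ring
    _ = ∫ x, ∫ y, conj (k y x) * (φ y * conj (u x)) ∂ν ∂μ := integral_integral_swap hint
    _ = ∫ x, inner ℂ (u x) (hg.toLp g x) ∂μ := by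
        refine integral_congr_ae ?_
        filter_upwards [hgk, hg.coeFn_toLp] with x hx hx'
        rw [RCLike.inner_apply, hx', hx, ← integral_mul_const]
        congr 1 with y
        ring

theorem Continuous.memLp_restrict_of_isBounded {X E : Type*} [PseudoMetricSpace X] [ProperSpace X]
    [MeasurableSpace X] [OpensMeasurableSpace X] [NormedAddCommGroup E] {f : X → E}
    (hf : Continuous f) {s : Set X} (hs : Bornology.IsBounded s) (μ : Measure X)
    [IsFiniteMeasure (μ.restrict s)] (p : ENNReal) : MemLp f p (μ.restrict s) := by
  obtain ⟨C, hC⟩ := hs.isCompact_closure.exists_bound_of_continuousOn hf.continuousOn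
  refine MemLp.of_bound hf.aestronglyMeasurable C ?_
  exact ae_restrict_of_ae_restrict_of_subset subset_closure
    (ae_restrict_of_forall_mem isClosed_closure.measurableSet hC)

theorem MeasureTheory.Integrable.ae_eq_zero_of_fourier_eq_zero {V F : Type*}
    [NormedAddCommGroup V] [InnerProductSpace ℝ V] [FiniteDimensional ℝ V] [MeasurableSpace V]
    [BorelSpace V] [NormedAddCommGroup F] [NormedSpace ℂ F] [CompleteSpace F] {f : V → F}
    (hf : Integrable f) (h : 𝓕 f = 0) : f =ᵐ[volume] 0 := by
  have hT : 𝓕 (Lp.toTemperedDistribution (hf.toL1 f)) = 0 := by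
    ext g
    rw [TemperedDistribution.fourier_apply, Lp.toTemperedDistribution_apply]
    calc ∫ x, 𝓕 g x • hf.toL1 f x = ∫ x, 𝓕 (g : V → ℂ) x • f x :=
          integral_congr_ae (hf.coeFn_toL1.mono fun x hx => by simp only [hx]; rfl)
      _ = ∫ x, g x • 𝓕 f x := by
          simpa using! VectorFourier.integral_fourierIntegral_smul_eq_flip (L := innerₗ V)
            Real.continuous_fourierChar continuous_inner (g.integrable (μ := volume)) hf
      _ = _ := by simp [h]
  have h0 : Lp.toTemperedDistribution (hf.toL1 f) = 0 := by
    simpa using congrArg 𝓕⁻ hT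
  have h1 : hf.toL1 f = 0 :=
    LinearMap.ker_eq_bot'.1 (Lp.ker_toTemperedDistributionCLM_eq_bot (μ := volume) (p := 1)) _ h0
  exact hf.coeFn_toL1.symm.trans (Lp.eq_zero_iff_ae_eq_zero.1 h1)

def fourierLaplace (μ : Measure ℝ) (φ : ℝ → ℂ) (z : ℂ) : ℂ :=
  ∫ τ, cexp (I * τ * z) * φ τ ∂μ

theorem norm_cexp_I_mul_le {τ R : ℝ} (hτ : |τ| ≤ R) (z : ℂ) :
    ‖cexp (I * τ * z)‖ ≤ Real.exp (R * |z.im|) := by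
  rw [Complex.norm_exp, Real.exp_le_exp]
  calc (I * τ * z).re = -(τ * z.im) := by simp
    _ ≤ |τ| * |z.im| := by rw [← abs_mul]; exact neg_le_abs _
    _ ≤ R * |z.im| := by gcongr

theorem integrable_cexp_I_mul_mul {μ : Measure ℝ} {R : ℝ} (hR : ∀ᵐ τ ∂μ, |τ| ≤ R)
    {φ : ℝ → ℂ} (hφ : Integrable φ μ) (z : ℂ) :
    Integrable (fun τ : ℝ => cexp (I * τ * z) * φ τ) μ :=
  hφ.bdd_mul (by fun_prop) (hR.mono fun _ hτ => norm_cexp_I_mul_le hτ z)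

theorem differentiable_fourierLaplace {μ : Measure ℝ} {R : ℝ} (hR : ∀ᵐ τ ∂μ, |τ| ≤ R)
    {φ : ℝ → ℂ} (hφ : Integrable φ μ) : Differentiable ℂ (fourierLaplace μ φ) := by
  intro z₀
  have hderiv : ∀ (τ : ℝ) z, HasDerivAt (fun z => cexp (I * τ * z) * φ τ)
      (I * τ * cexp (I * τ * z) * φ τ) z := fun τ z => by
    simpa [mul_comm, mul_left_comm, mul_assoc] using
      (((hasDerivAt_id z).const_mul (I * τ)).cexp).mul_const (φ τ)
  have hbound : ∀ᵐ (τ : ℝ) ∂μ, ∀ z ∈ Metric.ball z₀ 1,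
      ‖I * τ * cexp (I * τ * z) * φ τ‖ ≤ R * Real.exp (R * (|z₀.im| + 1)) * ‖φ τ‖ := by
    filter_upwards [hR] with τ hτ z hz
    have him : |z.im| ≤ |z₀.im| + 1 := by
      have := (abs_im_le_norm (z - z₀)).trans (mem_ball_iff_norm.1 hz).le
      rw [sub_im] at this
      linarith [abs_sub_abs_le_abs_sub z.im z₀.im]
    have hR0 : 0 ≤ R := (abs_nonneg τ).trans hτ
    rw [norm_mul, norm_mul, norm_mul, norm_I, one_mul, norm_real, Real.norm_eq_abs]
    gcongr
    exact (norm_cexp_I_mul_le hτ z).trans (Real.exp_le_exp.2 (by gcongr))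
  exact (hasDerivAt_integral_of_dominated_loc_of_deriv_le (Metric.ball_mem_nhds z₀ one_pos)
    (Eventually.of_forall fun z => (integrable_cexp_I_mul_mul hR hφ z).aestronglyMeasurable)
    (integrable_cexp_I_mul_mul hR hφ z₀) (F' := fun z τ => I * τ * cexp (I * τ * z) * φ τ)
    (by fun_prop) hbound (hφ.norm.const_mul _)
    (Eventually.of_forall fun τ z _ => hderiv τ z)).2.differentiableAt

theorem Differentiable.eq_zero_of_forall_mem_Ioo {F : ℂ → ℂ} (hF : Differentiable ℂ F)
    {a b : ℝ} (hab : a < b) (h : ∀ x ∈ Set.Ioo a b, F x = 0) : F = 0 := by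
  obtain ⟨c, hc⟩ := Set.nonempty_Ioo.2 hab
  have hIoo : Set.Ioo a b ∈ 𝓝 c := isOpen_Ioo.mem_nhds hc
  have hofReal : Tendsto ((↑) : ℝ → ℂ) (𝓝[≠] c) (𝓝[≠] (c : ℂ)) :=
    continuous_ofReal.continuousWithinAt.tendsto_nhdsWithin fun _ hx => ofReal_injective.ne hx
  have hfreq : ∃ᶠ z in 𝓝[≠] (c : ℂ), F z = 0 := hofReal.frequently
    (eventually_nhdsWithin_of_eventually_nhds (mem_of_superset hIoo h)).frequently
  have hA : AnalyticOnNhd ℂ F Set.univ := hF.differentiableOn.analyticOnNhd isOpen_univ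
  funext z
  exact hA.eqOn_zero_of_preconnected_of_frequently_eq_zero isPreconnected_univ (Set.mem_univ _)
    hfreq (Set.mem_univ z)

theorem ae_eq_zero_of_fourierLaplace_eq_zero {s : Set ℝ} (hs : MeasurableSet s) {φ : ℝ → ℂ}
    (hφ : IntegrableOn φ s) (h : ∀ ξ : ℝ, fourierLaplace (volume.restrict s) φ ξ = 0) :
    φ =ᵐ[volume.restrict s] 0 := by
  have h𝓕 : 𝓕 (s.indicator φ) = 0 := by
    funext w
    -- `𝓕` integrates against `e^{-2πivw}`, so `𝓕 (s.indicator φ) w` is the value at `-2πw`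
    rw [Real.fourier_real_eq_integral_exp_smul, Pi.zero_apply, ← h (-2 * Real.pi * w),
      fourierLaplace, ← integral_indicator hs]
    congr 1 with v
    by_cases hv : v ∈ s
    · simp only [Set.indicator_of_mem hv, smul_eq_mul]
      congr 2
      push_cast
      ring
    · simp [Set.indicator_of_notMem hv]
  have hind := (hφ.integrable_indicator hs).ae_eq_zero_of_fourier_eq_zero h𝓕
  filter_upwards [ae_restrict_mem hs, ae_restrict_of_ae hind] with x hxs hx
  simpa [Set.indicator_of_mem hxs] using hx

theorem norm_phase (τ ξ : ℝ) : ‖phase τ ξ‖ = 1 := by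
  simp [phase, Complex.norm_exp]

theorem conj_phase (τ ξ : ℝ) : conj (phase τ ξ) = cexp (I * τ * ξ) := by
  rw [phase, ← Complex.exp_conj]
  simp

@[fun_prop]
theorem Continuous.phase {α : Type*} [TopologicalSpace α] {f g : α → ℝ} (hf : Continuous f)
    (hg : Continuous g) : Continuous fun x => _root_.phase (f x) (g x) := by
  unfold _root_.phase
  fun_prop

theorem stmt_5_general (D : Set E3) (hDopen : IsOpen D) (hDne : D.Nonempty)
    (hDbdd : Bornology.IsBounded D)
    (tmin tmax Kb : ℝ) (ht : tmin < tmax)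
    (xhat : E3)
    (L : Lp ℂ 2 ((volume : Measure (E3 × ℝ)).restrict (D ×ˢ Set.Ioo tmin tmax)) →L[ℂ]
         Lp ℂ 2 ((volume : Measure ℝ).restrict (Set.Ioo 0 Kb)))
    (hL : ∀ u, ∀ᵐ τ ∂((volume : Measure ℝ).restrict (Set.Ioo 0 Kb)),
      (L u : ℝ → ℂ) τ =
        ∫ p in D ×ˢ Set.Ioo tmin tmax, phase τ (⟪xhat, p.1⟫ - p.2) * (u : E3 × ℝ → ℂ) p) :
    DenseRange L := by
  have hS : Bornology.IsBounded (D ×ˢ Set.Ioo tmin tmax) :=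
    hDbdd.prod (Metric.isBounded_Ioo tmin tmax)
  have : IsFiniteMeasure ((volume : Measure (E3 × ℝ)).restrict (D ×ˢ Set.Ioo tmin tmax)) :=
    isFiniteMeasure_restrict.2 hS.measure_lt_top.ne
  have : IsFiniteMeasure ((volume : Measure ℝ).restrict (Set.Ioo 0 Kb)) :=
    isFiniteMeasure_restrict.2 measure_Ioo_lt_top.ne
  refine L.denseRange_of_ker_adjoint_eq_bot (LinearMap.ker_eq_bot'.2 fun φ hφ => ?_)
  have hφ1 : Integrable φ ((volume : Measure ℝ).restrict (Set.Ioo 0 Kb)) :=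
    (Lp.memLp φ).integrable one_le_two
  set F := fourierLaplace ((volume : Measure ℝ).restrict (Set.Ioo 0 Kb)) φ
  have hF : Differentiable ℂ F := differentiable_fourierLaplace (R := Kb)
    ((ae_restrict_mem measurableSet_Ioo).mono fun τ hτ => (abs_of_pos hτ.1).trans_le hτ.2.le) hφ1
  have hFc : Continuous fun p : E3 × ℝ => F ↑(⟪xhat, p.1⟫ - p.2) := by
    have := hF.continuous
    fun_prop
  have hmem := hFc.memLp_restrict_of_isBounded hS volume 2
  have hadj : hmem.toLp _ = 0 := (L.adjoint_apply_eq_toLp_of_kernel (C := 1) (by fun_prop)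
    (fun τ p => (norm_phase τ _).le) hL φ hmem
    (ae_of_all _ fun p => by simp only [F, fourierLaplace, conj_phase])).symm.trans hφ
  have hzero : ∀ p ∈ D ×ˢ Set.Ioo tmin tmax, F ↑(⟪xhat, p.1⟫ - p.2) = 0 :=
    Measure.eqOn_open_of_ae_eq (hmem.coeFn_toLp.symm.trans (hadj ▸ Lp.coeFn_zero _ _ _))
      (hDopen.prod isOpen_Ioo) hFc.continuousOn continuousOn_const
  obtain ⟨y, hy⟩ := hDne
  have hF0 : F = 0 := hF.eq_zero_of_forall_mem_Ioo (a := ⟪xhat, y⟫ - tmax) (b := ⟪xhat, y⟫ - tmin)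
    (by linarith) fun ξ hξ => by
      simpa using hzero (y, ⟪xhat, y⟫ - ξ) ⟨hy, by constructor <;> linarith [hξ.1, hξ.2]⟩
  exact Lp.eq_zero_iff_ae_eq_zero.2
    (ae_eq_zero_of_fourierLaplace_eq_zero measurableSet_Ioo hφ1 fun ξ => congrFun hF0 ξ)

theorem stmt_5 (D : Set E3) (hDopen : IsOpen D) (hDne : D.Nonempty)
    (hDbdd : Bornology.IsBounded D)
    (tmin tmax Kb : ℝ) (htmin : 0 ≤ tmin) (ht : tmin < tmax) (hK : 0 < Kb)
    (xhat : E3) (hx : ‖xhat‖ = 1)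
    (L : Lp ℂ 2 ((volume : Measure (E3 × ℝ)).restrict (D ×ˢ Set.Ioo tmin tmax)) →L[ℂ]
         Lp ℂ 2 ((volume : Measure ℝ).restrict (Set.Ioo 0 Kb)))
    (hL : ∀ u, ∀ᵐ τ ∂((volume : Measure ℝ).restrict (Set.Ioo 0 Kb)),
      (L u : ℝ → ℂ) τ =
        ∫ p in D ×ˢ Set.Ioo tmin tmax, phase τ (⟪xhat, p.1⟫ - p.2) * (u : E3 × ℝ → ℂ) p) :
    DenseRange L :=
  stmt_5_general D hDopen hDne hDbdd tmin tmax Kb ht xhat L hL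

end
end

section
/- Let D ⊂ ℝ³ be bounded, 0 ≤ t_min < t_max, x̂ ∈ S², f ∈ L²(D × (t_min, t_max)), and define G(τ) = ∫_{t_min}^{t_max} ∫_D e^{−iτ(x̂·y − t)} f(y,t) dy dt for τ ∈ ℝ. Then the support of the inverse Fourier transform of G is contained in the interval [inf(x̂·D) − t_max, sup(x̂·D) − t_min]. -/
/-!
`G` is the Fourier transform of the pushforward of `f · dy dt` under `s (y, t) = x̂·y - t`,
a measure carried by `[inf (x̂·D) - t_max, sup (x̂·D) - t_min]`. Damping the inverse Fourier
integral by `exp (-ε τ²)` and applying Fubini turns it into the integral of `f` against the heat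
kernel `(π / ε)^(1/2) exp (-(ξ - s)² / 4ε)`; for `ξ` at distance `δ > 0` from that interval this
is `O (ε^(-1/2) exp (-δ² / 4ε)) → 0`, while by dominated convergence it tends to the undamped
integral as `ε → 0⁺`. If the undamped integral does not converge absolutely, the Bochner
integral is `0` anyway.
-/

open MeasureTheory Complex
open scoped RealInnerProductSpace

noncomputable section

open Filter Topology

lemma norm_exp_neg_mul_sq (ε τ : ℝ) :
    ‖Complex.exp (-(ε : ℂ) * (τ : ℂ) ^ 2)‖ = Real.exp (-ε * τ ^ 2) := by
  rw [← Complex.norm_exp_ofReal]; push_cast; rfl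

lemma tendsto_integral_mul_exp_neg_mul_sq {g : ℝ → ℂ} (hg : Integrable g) :
    Tendsto (fun ε : ℝ => ∫ τ, g τ * Complex.exp (-(ε : ℂ) * (τ : ℂ) ^ 2)) (𝓝[>] 0)
      (𝓝 (∫ τ, g τ)) := by
  refine tendsto_integral_filter_of_dominated_convergence (fun τ => ‖g τ‖) ?_ ?_ hg.norm ?_
  · exact Eventually.of_forall fun ε => hg.1.mul (by fun_prop)
  · filter_upwards [self_mem_nhdsWithin] with ε (hε : 0 < ε)
    refine Eventually.of_forall fun τ => ?_
    rw [norm_mul, norm_exp_neg_mul_sq]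
    refine mul_le_of_le_one_right (norm_nonneg _) (Real.exp_le_one_iff.mpr ?_)
    nlinarith [sq_nonneg τ]
  · refine Eventually.of_forall fun τ => ?_
    have h : Tendsto (fun ε : ℝ => Complex.exp (-(ε : ℂ) * (τ : ℂ) ^ 2)) (𝓝[>] 0) (𝓝 1) := by
      have hc : Continuous fun ε : ℝ => Complex.exp (-(ε : ℂ) * (τ : ℂ) ^ 2) := by fun_prop
      simpa using (hc.tendsto 0).mono_left nhdsWithin_le_nhds
    simpa using tendsto_const_nhds.mul h

lemma tendsto_sqrt_div_mul_exp_neg_div_nhdsGT_zero (a : ℝ) {c : ℝ} (hc : 0 < c) :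
    Tendsto (fun ε : ℝ => √(a / ε) * Real.exp (-c / ε)) (𝓝[>] 0) (𝓝 0) := by
  have hdecay :
      Tendsto (fun u : ℝ => √a * (u ^ (1 / 2 : ℝ) * Real.exp (-c * u))) atTop (𝓝 0) := by
    simpa using (tendsto_rpow_mul_exp_neg_mul_atTop_nhds_zero (1 / 2) c hc).const_mul √a
  refine (hdecay.comp tendsto_inv_nhdsGT_zero).congr' ?_
  filter_upwards [self_mem_nhdsWithin] with ε (hε : 0 < ε)
  rw [Function.comp_apply, ← Real.sqrt_eq_rpow, ← mul_assoc,
    ← Real.sqrt_mul' a (inv_nonneg.2 hε.le), div_eq_mul_inv, div_eq_mul_inv]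

section PhaseTransform

variable {α : Type*} [MeasurableSpace α] {μ : Measure α} {s : α → ℝ} {f : α → ℂ}

lemma integrable_exp_mul_exp_neg_mul_sq_mul [SFinite μ] (hs : Measurable s)
    (hf : Integrable f μ) (ξ : ℝ) {ε : ℝ} (hε : 0 < ε) :
    Integrable (fun q : ℝ × α => Complex.exp (Complex.I * ((ξ - s q.2 : ℝ) : ℂ) * q.1) *
      Complex.exp (-(ε : ℂ) * (q.1 : ℂ) ^ 2) * f q.2) ((volume : Measure ℝ).prod μ) := by
  refine ((integrable_exp_neg_mul_sq hε).mul_prod hf.norm).mono' ?_ ?_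
  · exact ((by fun_prop : Measurable fun q : ℝ × α => Complex.exp
      (Complex.I * ((ξ - s q.2 : ℝ) : ℂ) * q.1) * Complex.exp (-(ε : ℂ) * (q.1 : ℂ) ^ 2)
      ).aestronglyMeasurable).mul hf.1.comp_snd
  · refine Eventually.of_forall fun q => ?_
    have hunit : ‖Complex.exp (Complex.I * ((ξ - s q.2 : ℝ) : ℂ) * q.1)‖ = 1 := by
      rw [Complex.norm_exp]; simp
    rw [norm_mul, norm_mul, hunit, norm_exp_neg_mul_sq, one_mul]

lemma integral_phase_mul_exp_mul_exp_neg_mul_sq [SFinite μ] (hs : Measurable s)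
    (hf : Integrable f μ) (ξ : ℝ) {ε : ℝ} (hε : 0 < ε) :
    ∫ τ : ℝ, (∫ p, phase τ (s p) * f p ∂μ) * Complex.exp (Complex.I * τ * ξ) *
        Complex.exp (-(ε : ℂ) * (τ : ℂ) ^ 2)
      = ∫ p, ((Real.pi : ℂ) / ε) ^ (1 / 2 : ℂ) *
          Complex.exp (-((ξ - s p : ℝ) : ℂ) ^ 2 / (4 * ε)) * f p ∂μ := by
  have hphase : ∀ (τ : ℝ) (p : α), phase τ (s p) * Complex.exp (Complex.I * τ * ξ) =
      Complex.exp (Complex.I * ((ξ - s p : ℝ) : ℂ) * τ) := by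
    intro τ p
    rw [phase, ← Complex.exp_add]; push_cast; ring_nf
  calc _ = ∫ τ : ℝ, ∫ p, Complex.exp (Complex.I * ((ξ - s p : ℝ) : ℂ) * τ) *
          Complex.exp (-(ε : ℂ) * (τ : ℂ) ^ 2) * f p ∂μ := by
        congr 1 with τ
        rw [← integral_mul_const, ← integral_mul_const]
        congr 1 with p
        rw [← hphase]; ring
    _ = ∫ p, (∫ τ : ℝ, Complex.exp (Complex.I * ((ξ - s p : ℝ) : ℂ) * τ) *
          Complex.exp (-(ε : ℂ) * (τ : ℂ) ^ 2) * f p) ∂μ :=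
        integral_integral_swap (integrable_exp_mul_exp_neg_mul_sq_mul hs hf ξ hε)
    _ = _ := by
        congr 1 with p
        rw [integral_mul_const, fourierIntegral_gaussian (by simpa using hε)]

lemma norm_integral_heatKernel_mul_le (hf : Integrable f μ) {ξ δ ε : ℝ} (hδ : 0 ≤ δ)
    (hε : 0 < ε) (hsδ : ∀ᵐ p ∂μ, δ ≤ |ξ - s p|) :
    ‖∫ p, ((Real.pi : ℂ) / ε) ^ (1 / 2 : ℂ) *
        Complex.exp (-((ξ - s p : ℝ) : ℂ) ^ 2 / (4 * ε)) * f p ∂μ‖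
      ≤ √(Real.pi / ε) * Real.exp (-(δ ^ 2 / 4) / ε) * ∫ p, ‖f p‖ ∂μ := by
  have hsqrt : ‖((Real.pi : ℂ) / ε) ^ (1 / 2 : ℂ)‖ = √(Real.pi / ε) := by
    rw [← Complex.ofReal_div, Complex.norm_cpow_eq_rpow_re_of_pos (by positivity),
      Real.sqrt_eq_rpow]
    norm_num
  have hkernel : ∀ p, δ ≤ |ξ - s p| →
      ‖Complex.exp (-((ξ - s p : ℝ) : ℂ) ^ 2 / (4 * ε))‖ ≤ Real.exp (-(δ ^ 2 / 4) / ε) := by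
    intro p hp
    rw [← Complex.ofReal_pow, ← Complex.ofReal_neg, ← Complex.ofReal_ofNat,
      ← Complex.ofReal_mul, ← Complex.ofReal_div, Complex.norm_exp_ofReal, Real.exp_le_exp,
      neg_div, neg_div, neg_le_neg_iff, div_div, mul_comm,
      div_le_div_iff_of_pos_right (by positivity)]
    simpa using pow_le_pow_left₀ hδ hp 2
  calc _ ≤ ∫ p, √(Real.pi / ε) * Real.exp (-(δ ^ 2 / 4) / ε) * ‖f p‖ ∂μ := by
        refine norm_integral_le_of_norm_le (hf.norm.const_mul _) ?_
        filter_upwards [hsδ] with p hp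
        rw [norm_mul, norm_mul, hsqrt]
        gcongr
        exact hkernel p hp
    _ = _ := integral_const_mul _ _

theorem integral_phase_mul_exp_eq_zero_of_notMem [SFinite μ] (hs : Measurable s)
    (hf : Integrable f μ) {K : Set ℝ} (hK : IsClosed K) (hsK : ∀ᵐ p ∂μ, s p ∈ K) {ξ : ℝ}
    (hξ : ξ ∉ K) :
    ∫ τ : ℝ, (∫ p, phase τ (s p) * f p ∂μ) * Complex.exp (Complex.I * τ * ξ) = 0 := by
  by_cases hint : Integrable fun τ : ℝ =>
    (∫ p, phase τ (s p) * f p ∂μ) * Complex.exp (Complex.I * τ * ξ)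
  swap
  · exact integral_undef hint
  obtain ⟨δ, hδ, hball⟩ := Metric.isOpen_iff.1 hK.isOpen_compl ξ hξ
  have hsδ : ∀ᵐ p ∂μ, δ ≤ |ξ - s p| := by
    filter_upwards [hsK] with p hp
    by_contra! h
    exact hball (by rwa [Metric.mem_ball, Real.dist_eq, abs_sub_comm]) hp
  have hbound : Tendsto (fun ε : ℝ => √(Real.pi / ε) * Real.exp (-(δ ^ 2 / 4) / ε) *
      ∫ p, ‖f p‖ ∂μ) (𝓝[>] 0) (𝓝 0) := by
    simpa using (tendsto_sqrt_div_mul_exp_neg_div_nhdsGT_zero Real.pi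
      (by positivity : 0 < δ ^ 2 / 4)).mul_const (∫ p, ‖f p‖ ∂μ)
  refine tendsto_nhds_unique (tendsto_integral_mul_exp_neg_mul_sq hint)
    (squeeze_zero_norm' ?_ hbound)
  filter_upwards [self_mem_nhdsWithin] with ε (hε : 0 < ε)
  rw [integral_phase_mul_exp_mul_exp_neg_mul_sq hs hf ξ hε]
  exact norm_integral_heatKernel_mul_le hf hδ.le hε hsδ

end PhaseTransform

theorem stmt_7_general (D : Set E3) (hDbdd : Bornology.IsBounded D)
    (tmin tmax : ℝ)
    (xhat : E3)
    (f : E3 × ℝ → ℂ)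
    (hf : MemLp f 2 ((volume : Measure (E3 × ℝ)).restrict (D ×ˢ Set.Ioo tmin tmax)))
    (G : ℝ → ℂ)
    (hG : ∀ τ : ℝ, G τ = ∫ p in D ×ˢ Set.Ioo tmin tmax, phase τ (⟪xhat, p.1⟫ - p.2) * f p) :
    -- the inverse Fourier transform of `G` vanishes outside
    -- `[inf(x̂·D) - t_max, sup(x̂·D) - t_min]`:
    ∀ ξ : ℝ, ξ ∉ Set.Icc (sInf ((fun y => ⟪xhat, y⟫) '' D) - tmax)
        (sSup ((fun y => ⟪xhat, y⟫) '' D) - tmin) →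
      ((Real.sqrt (2 * Real.pi) : ℂ))⁻¹ *
        ∫ τ : ℝ, G τ * Complex.exp (Complex.I * τ * ξ) = 0 := by
  intro ξ hξ
  set S := D ×ˢ Set.Ioo tmin tmax
  have hSfin : volume S ≠ ⊤ := by
    rw [Measure.volume_eq_prod, Measure.prod_prod]
    exact ENNReal.mul_ne_top hDbdd.measure_lt_top.ne measure_Ioo_lt_top.ne
  have : IsFiniteMeasure (volume.restrict S) := isFiniteMeasure_restrict.2 hSfin
  have hproj : Bornology.IsBounded ((fun y => ⟪xhat, y⟫) '' D) :=
    (innerSL ℝ xhat).lipschitz.isBounded_image hDbdd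
  have hsK : ∀ᵐ p ∂volume.restrict S, ⟪xhat, p.1⟫ - p.2 ∈ Set.Icc
      (sInf ((fun y => ⟪xhat, y⟫) '' D) - tmax) (sSup ((fun y => ⟪xhat, y⟫) '' D) - tmin) := by
    rw [ae_restrict_iff (measurableSet_Icc.preimage (by fun_prop))]
    refine Eventually.of_forall fun p ⟨hy, ht⟩ => ⟨?_, ?_⟩
    · linarith [csInf_le hproj.bddBelow (Set.mem_image_of_mem _ hy), ht.2]
    · linarith [le_csSup hproj.bddAbove (Set.mem_image_of_mem _ hy), ht.1]
  simp only [hG]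
  rw [integral_phase_mul_exp_eq_zero_of_notMem (by fun_prop) (hf.integrable one_le_two)
    isClosed_Icc hsK hξ, mul_zero]

theorem stmt_7 (D : Set E3) (hDne : D.Nonempty) (hDbdd : Bornology.IsBounded D)
    (hDmeas : MeasurableSet D)
    (tmin tmax : ℝ) (htmin : 0 ≤ tmin) (ht : tmin < tmax)
    (xhat : E3) (hx : ‖xhat‖ = 1)
    (f : E3 × ℝ → ℂ)
    (hf : MemLp f 2 ((volume : Measure (E3 × ℝ)).restrict (D ×ˢ Set.Ioo tmin tmax)))
    (G : ℝ → ℂ)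
    (hG : ∀ τ : ℝ, G τ = ∫ p in D ×ˢ Set.Ioo tmin tmax, phase τ (⟪xhat, p.1⟫ - p.2) * f p) :
    -- the inverse Fourier transform of `G` vanishes outside
    -- `[inf(x̂·D) - t_max, sup(x̂·D) - t_min]`:
    ∀ ξ : ℝ, ξ ∉ Set.Icc (sInf ((fun y => ⟪xhat, y⟫) '' D) - tmax)
        (sSup ((fun y => ⟪xhat, y⟫) '' D) - tmin) →
      ((Real.sqrt (2 * Real.pi) : ℂ))⁻¹ *
        ∫ τ : ℝ, G τ * Complex.exp (Complex.I * τ * ξ) = 0 :=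
  stmt_7_general D hDbdd tmin tmax xhat f hf G hG

end
end

section
/- Suppose S(x,t) ≥ c₀ > 0 on D̄ × [t_min, t_max] with D bounded. Fix x̂ ∈ S², and for a connected component D_j of D define g_j(ξ) = ∫_{t_min}^{t_max} (∫_{{y ∈ D_j : x̂·y = ξ + t}} S(y,t) ds(y)) dt. Then g_j(ξ) > 0 for every ξ ∈ (inf(x̂·D_j) − t_max, sup(x̂·D_j) − t_min) and g_j(ξ) = 0 for ξ outside [inf(x̂·D_j) − t_max, sup(x̂·D_j) − t_min]. -/
/-!
The slice `{y | ⟪x̂, y⟫ = c}` is parametrized isometrically by `v ↦ c • x̂ + v` on the plane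
`(ℝ ∙ x̂)ᗮ`, so the surface integral becomes an integral against `μH[2]` on that plane, which is
a Haar measure. If `ξ + t` misses the range of `⟪x̂, ·⟫` on `D_j`, the slice is empty and the
inner integral vanishes. The range is a bounded open interval (`D_j` is open and connected), and
for `ξ` in the stated interval `ξ + t` lies in it for all `t` in a nonempty open subset of
`(t_min, t_max)`; there the slice of `D_j` is a nonempty open subset of the plane on which
`S > 0`, so the inner integral is positive. Measurability in `t` comes from Fubini on
`ℝ × (ℝ ∙ x̂)ᗮ`.
-/

open MeasureTheory Complex
open scoped RealInnerProductSpace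

noncomputable section

open Set Module

section Hyperplane

variable {E : Type*} [NormedAddCommGroup E] [InnerProductSpace ℝ E]

def hyperplaneParam (x : E) (c : ℝ) (v : (ℝ ∙ x)ᗮ) : E := c • x + v

variable {x : E}

theorem isometry_hyperplaneParam (c : ℝ) : Isometry (hyperplaneParam x c) :=
  Isometry.of_dist_eq fun v w => by simp [hyperplaneParam, dist_eq_norm]

theorem continuous_hyperplaneParam :
    Continuous fun p : ℝ × (ℝ ∙ x)ᗮ => hyperplaneParam x p.1 p.2 := by
  unfold hyperplaneParam; fun_prop

theorem preimage_hyperplaneParam_subset_closedBall {U : Set E} {R : ℝ}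
    (hU : U ⊆ Metric.closedBall 0 R) (c : ℝ) :
    hyperplaneParam x c ⁻¹' U ⊆ Metric.closedBall 0 R := by
  intro v hv
  have h_orth : ⟪c • x, (v : E)⟫ = 0 := by
    rw [real_inner_smul_left, Submodule.mem_orthogonal_singleton_iff_inner_right.1 v.2, mul_zero]
  have h_pyth := norm_add_sq_eq_norm_sq_add_norm_sq_real h_orth
  have h_R : ‖c • x + v‖ ≤ R := by simpa [hyperplaneParam] using hU hv
  simp only [Metric.mem_closedBall, dist_zero_right, Submodule.coe_norm]
  nlinarith [norm_nonneg (v : E), norm_nonneg (c • x + v), norm_nonneg (c • x)]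

theorem range_hyperplaneParam (hx : ‖x‖ = 1) (c : ℝ) :
    range (hyperplaneParam x c) = {y | ⟪x, y⟫ = c} := by
  have hxx : ⟪x, x⟫ = 1 := by rw [real_inner_self_eq_norm_sq, hx, one_pow]
  ext y
  constructor
  · rintro ⟨v, rfl⟩
    simp [hyperplaneParam, inner_add_right, real_inner_smul_right, hx,
      Submodule.mem_orthogonal_singleton_iff_inner_right.1 v.2]
  · intro hy
    refine ⟨⟨y - c • x, Submodule.mem_orthogonal_singleton_iff_inner_right.2 ?_⟩, ?_⟩
    · rw [inner_sub_right, real_inner_smul_right, hxx, mul_one, hy, sub_self]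
    · simp [hyperplaneParam]

theorem isOpen_image_inner [CompleteSpace E] (hx : x ≠ 0) {U : Set E} (hU : IsOpen U) :
    IsOpen ((fun y => ⟪x, y⟫) '' U) := by
  refine (innerSL ℝ x).isOpenMap (fun c => ⟨(c / ‖x‖ ^ 2) • x, ?_⟩) U hU
  simp [hx]

variable [CompleteSpace E] [MeasurableSpace E] [BorelSpace E]

theorem setIntegral_inter_hyperplane {G : Type*} [NormedAddCommGroup G] [NormedSpace ℝ G]
    (hx : ‖x‖ = 1) {d : ℝ} (hd : 0 ≤ d) (s : Set E) (f : E → G) (c : ℝ) :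
    ∫ y in {y ∈ s | ⟪x, y⟫ = c}, f y ∂μH[d] =
      ∫ v in hyperplaneParam x c ⁻¹' s, f (hyperplaneParam x c v) ∂μH[d] := by
  have hι := isometry_hyperplaneParam (x := x) c
  have hemb : MeasurableEmbedding (hyperplaneParam x c) :=
    hι.isClosedEmbedding.measurableEmbedding
  have hslice : {y ∈ s | ⟪x, y⟫ = c} = s ∩ range (hyperplaneParam x c) := by
    rw [range_hyperplaneParam hx]; rfl
  rw [hslice, ← Measure.restrict_restrict' hemb.measurableSet_range,
    ← hι.map_hausdorffMeasure (Or.inl hd), hemb.setIntegral_map]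

end Hyperplane

theorem setIntegral_pos_of_pos_on_isOpen {X : Type*} [TopologicalSpace X] [MeasurableSpace X]
    [OpensMeasurableSpace X] {μ : Measure X} [μ.IsOpenPosMeasure] {f : X → ℝ} {s V : Set X}
    (hs : MeasurableSet s) (hf : IntegrableOn f s μ) (hf_nonneg : ∀ x ∈ s, 0 ≤ f x)
    (hV : IsOpen V) (hV_ne : V.Nonempty) (hVs : V ⊆ s) (hf_pos : ∀ x ∈ V, 0 < f x) :
    0 < ∫ x in s, f x ∂μ := by
  rw [setIntegral_pos_iff_support_of_nonneg_ae (ae_restrict_of_forall_mem hs hf_nonneg) hf]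
  exact (hV.measure_pos μ hV_ne).trans_le
    (measure_mono fun x hx => ⟨(hf_pos x hx).ne', hVs hx⟩)

theorem MeasureTheory.StronglyMeasurable.setIntegral_prod_right {α β G : Type*}
    [MeasurableSpace α] [MeasurableSpace β] [NormedAddCommGroup G] [NormedSpace ℝ G]
    {ν : Measure β} [SFinite ν] {f : α × β → G} (hf : StronglyMeasurable f)
    {s : Set (α × β)} (hs : MeasurableSet s) :
    StronglyMeasurable fun a => ∫ b in Prod.mk a ⁻¹' s, f (a, b) ∂ν := by
  convert (hf.indicator hs).integral_prod_right' (ν := ν) using 1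
  funext a
  rw [← integral_indicator (measurable_prodMk_left hs)]
  rfl

section SlicePositivity

variable {E : Type*} [NormedAddCommGroup E] [InnerProductSpace ℝ E] [FiniteDimensional ℝ E]
  [MeasurableSpace E] [BorelSpace E] {x : E} {U : Set E}

theorem stronglyMeasurable_setIntegral_hyperplaneParam (hU : MeasurableSet U)
    {S : E → ℝ → ℝ} (hS : Measurable fun p : E × ℝ => S p.1 p.2) (ξ : ℝ)
    (μ : Measure (ℝ ∙ x)ᗮ) [SFinite μ] :
    StronglyMeasurable fun t =>
      ∫ v in hyperplaneParam x (ξ + t) ⁻¹' U, S (hyperplaneParam x (ξ + t) v) t ∂μ := by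
  have h_cont : Continuous fun p : ℝ × (ℝ ∙ x)ᗮ => hyperplaneParam x (ξ + p.1) p.2 :=
    continuous_hyperplaneParam.comp ((continuous_const.add continuous_fst).prodMk continuous_snd)
  exact (hS.comp (h_cont.measurable.prodMk measurable_fst)).stronglyMeasurable
    |>.setIntegral_prod_right (hU.preimage h_cont.measurable)

theorem setIntegral_hyperplaneParam_pos (hU : IsOpen U) (hU_bdd : Bornology.IsBounded U)
    {f : E → ℝ} (hf : Measurable f) {M : ℝ} (hf_pos : ∀ y ∈ U, 0 < f y)
    (hf_le : ∀ y ∈ U, f y ≤ M) {c : ℝ} (h_ne : (hyperplaneParam x c ⁻¹' U).Nonempty) :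
    0 < ∫ v in hyperplaneParam x c ⁻¹' U, f (hyperplaneParam x c v)
      ∂μH[finrank ℝ (ℝ ∙ x)ᗮ] := by
  have h_open : IsOpen (hyperplaneParam x c ⁻¹' U) :=
    hU.preimage (isometry_hyperplaneParam c).continuous
  obtain ⟨R, hR⟩ := hU_bdd.subset_closedBall 0
  have h_fin : μH[finrank ℝ (ℝ ∙ x)ᗮ] (hyperplaneParam x c ⁻¹' U) < ⊤ :=
    (measure_mono (preimage_hyperplaneParam_subset_closedBall hR c)).trans_lt
      measure_closedBall_lt_top
  refine setIntegral_pos_of_pos_on_isOpen h_open.measurableSet ?_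
    (fun v hv => (hf_pos _ hv).le) h_open h_ne subset_rfl (fun v hv => hf_pos _ hv)
  refine Measure.integrableOn_of_bounded (M := M) h_fin.ne
    (hf.comp (isometry_hyperplaneParam c).continuous.measurable).aestronglyMeasurable
    (ae_restrict_of_forall_mem h_open.measurableSet fun v hv => ?_)
  rw [Real.norm_of_nonneg (hf_pos _ hv).le]
  exact hf_le _ hv

theorem integral_setIntegral_inter_hyperplane_pos (hx : ‖x‖ = 1) (hU : IsOpen U)
    (hU_bdd : Bornology.IsBounded U) {S : E → ℝ → ℝ}
    (hS : Measurable fun p : E × ℝ => S p.1 p.2) {a b M : ℝ}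
    (hS_pos : ∀ y ∈ U, ∀ t ∈ Ioo a b, 0 < S y t) (hS_le : ∀ y ∈ U, ∀ t ∈ Ioo a b, S y t ≤ M)
    {ξ : ℝ} (hξ : ∃ t ∈ Ioo a b, ξ + t ∈ (fun y => ⟪x, y⟫) '' U) :
    0 < ∫ t in Ioo a b, ∫ y in {y ∈ U | ⟪x, y⟫ = ξ + t}, S y t ∂μH[finrank ℝ (ℝ ∙ x)ᗮ] := by
  set ι := hyperplaneParam x
  set μ : Measure (ℝ ∙ x)ᗮ := μH[finrank ℝ (ℝ ∙ x)ᗮ]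
  simp_rw [setIntegral_inter_hyperplane hx (Nat.cast_nonneg _) U]
  have hM : 0 ≤ M := by
    obtain ⟨t₀, ht₀, y₀, hy₀, -⟩ := hξ
    exact (hS_pos y₀ hy₀ t₀ ht₀).le.trans (hS_le y₀ hy₀ t₀ ht₀)
  obtain ⟨R, hR⟩ := hU_bdd.subset_closedBall 0
  have h_bound : ∀ t ∈ Ioo a b,
      ‖∫ v in ι (ξ + t) ⁻¹' U, S (ι (ξ + t) v) t ∂μ‖ ≤ M * μ.real (Metric.closedBall 0 R) := by
    intro t ht
    have h_sub : ι (ξ + t) ⁻¹' U ⊆ _ := preimage_hyperplaneParam_subset_closedBall hR _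
    refine (norm_setIntegral_le_of_norm_le_const
      ((measure_mono h_sub).trans_lt measure_closedBall_lt_top) fun v hv => ?_).trans
      (mul_le_mul_of_nonneg_left (measureReal_mono h_sub measure_closedBall_lt_top.ne) hM)
    rw [Real.norm_of_nonneg (hS_pos _ hv t ht).le]
    exact hS_le _ hv t ht
  have hx0 : x ≠ 0 := ne_zero_of_norm_ne_zero (by rw [hx]; exact one_ne_zero)
  refine setIntegral_pos_of_pos_on_isOpen measurableSet_Ioo ?_ (fun t ht => ?_)
    (isOpen_Ioo.inter ((isOpen_image_inner hx0 hU).preimage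
      (continuous_const.add continuous_id))) hξ inter_subset_left ?_
  · exact Measure.integrableOn_of_bounded (by simp)
      (stronglyMeasurable_setIntegral_hyperplaneParam hU.measurableSet hS ξ μ).aestronglyMeasurable
      (ae_restrict_of_forall_mem measurableSet_Ioo h_bound)
  · exact setIntegral_nonneg (hU.preimage (isometry_hyperplaneParam _).continuous).measurableSet
      fun v hv => (hS_pos _ hv t ht).le
  · rintro t ⟨ht, y, hy, hyt⟩
    obtain ⟨v, rfl⟩ : y ∈ range (ι (ξ + t)) := by rwa [range_hyperplaneParam hx]
    exact setIntegral_hyperplaneParam_pos hU hU_bdd (hS.comp (measurable_id.prodMk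
      measurable_const)) (fun y hy => hS_pos y hy t ht) (fun y hy => hS_le y hy t ht) ⟨v, hy⟩

end SlicePositivity

theorem IsOpen.csInf_lt_csSup {α : Type*} [ConditionallyCompleteLinearOrder α]
    [TopologicalSpace α] [OrderTopology α] [DenselyOrdered α] [NoMinOrder α] {s : Set α}
    (hs : IsOpen s) (hne : s.Nonempty) (hb : BddBelow s) (ha : BddAbove s) :
    sInf s < sSup s := by
  obtain ⟨a, has⟩ := hne
  obtain ⟨l, hl, hls⟩ := exists_Ioc_subset_of_mem_nhds (hs.mem_nhds has) (exists_lt a)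
  obtain ⟨c, hlc, hca⟩ := exists_between hl
  exact (csInf_le hb (hls ⟨hlc, hca.le⟩)).trans_lt (hca.trans_le (le_csSup ha has))

theorem stmt_16_general (D Dj : Set E3) (hDbdd : Bornology.IsBounded D)
    (hsub : Dj ⊆ D) (hDjopen : IsOpen Dj) (hDjconn : IsConnected Dj)
    (tmin tmax : ℝ) (ht : tmin < tmax)
    (xhat : E3) (hx : ‖xhat‖ = 1)
    (c₀ : ℝ) (hc₀ : 0 < c₀)
    (S : E3 → ℝ → ℝ)
    (hSmeas : Measurable (fun p : E3 × ℝ => S p.1 p.2))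
    (hSbdd : ∃ M : ℝ, ∀ y ∈ D, ∀ t ∈ Set.Icc tmin tmax, S y t ≤ M)
    -- `S ≥ c₀ > 0` on `D̄ × [t_min, t_max]`:
    (hSpos : ∀ y ∈ closure D, ∀ t ∈ Set.Icc tmin tmax, c₀ ≤ S y t)
    (g : ℝ → ℝ)
    -- `g_j(ξ) = ∫_{t_min}^{t_max} ∫_{{y ∈ D_j : x̂·y = ξ+t}} S(y,t) ds(y) dt`,
    -- with `ds` the 2-dimensional (Hausdorff) surface measure:
    (hg : ∀ ξ : ℝ, g ξ = ∫ t in Set.Ioo tmin tmax,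
      ∫ y in {y ∈ Dj | ⟪xhat, y⟫ = ξ + t}, S y t ∂(μH[2])) :
    (∀ ξ ∈ Set.Ioo (sInf ((fun y => ⟪xhat, y⟫) '' Dj) - tmax)
        (sSup ((fun y => ⟪xhat, y⟫) '' Dj) - tmin), 0 < g ξ) ∧
    (∀ ξ : ℝ, ξ ∉ Set.Icc (sInf ((fun y => ⟪xhat, y⟫) '' Dj) - tmax)
        (sSup ((fun y => ⟪xhat, y⟫) '' Dj) - tmin) → g ξ = 0) := by
  set P := (fun y => ⟪xhat, y⟫) '' Dj
  have hDj_bdd : Bornology.IsBounded Dj := hDbdd.subset hsub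
  have hP_bdd : Bornology.IsBounded P := (innerSL ℝ xhat).lipschitz.isBounded_image hDj_bdd
  refine ⟨fun ξ hξ => ?_, fun ξ hξ => ?_⟩
  · obtain ⟨M, hM⟩ := hSbdd
    have hx0 : xhat ≠ 0 := ne_zero_of_norm_ne_zero (by rw [hx]; exact one_ne_zero)
    have hd : (finrank ℝ (ℝ ∙ xhat)ᗮ : ℝ) = 2 := by
      have : Fact (finrank ℝ E3 = 2 + 1) := ⟨by simp⟩
      rw [Submodule.finrank_orthogonal_span_singleton (n := 2) hx0, Nat.cast_ofNat]
    have hP_lt : sInf P < sSup P := (isOpen_image_inner hx0 hDjopen).csInf_lt_csSup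
      (hDjconn.nonempty.image _) hP_bdd.bddBelow hP_bdd.bddAbove
    obtain ⟨t, ht_mem, htP⟩ : (Ioo tmin tmax ∩ Ioo (sInf P - ξ) (sSup P - ξ)).Nonempty := by
      rw [Ioo_inter_Ioo, nonempty_Ioo, max_lt_iff, lt_min_iff, lt_min_iff]
      exact ⟨⟨ht, by linarith [hξ.2]⟩, by linarith [hξ.1], by linarith⟩
    rw [hg, ← hd]
    refine integral_setIntegral_inter_hyperplane_pos hx hDjopen hDj_bdd hSmeas
      (fun y hy t ht =>
        hc₀.trans_le (hSpos y (subset_closure (hsub hy)) t (Ioo_subset_Icc_self ht)))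
      (fun y hy t ht => hM y (hsub hy) t (Ioo_subset_Icc_self ht)) ⟨t, ht_mem, ?_⟩
    exact (hDjconn.image _ (by fun_prop)).Ioo_csInf_csSup_subset
      hP_bdd.bddBelow hP_bdd.bddAbove ⟨by linarith [htP.1], by linarith [htP.2]⟩
  · rw [hg]
    refine setIntegral_eq_zero_of_forall_eq_zero fun t ht => ?_
    suffices {y ∈ Dj | ⟪xhat, y⟫ = ξ + t} = ∅ by
      rw [this, Measure.restrict_empty, integral_zero_measure]
    refine eq_empty_of_forall_notMem fun y ⟨hy, hyt⟩ => hξ ⟨?_, ?_⟩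
    · linarith [csInf_le hP_bdd.bddBelow ⟨y, hy, hyt⟩, ht.2]
    · linarith [le_csSup hP_bdd.bddAbove ⟨y, hy, hyt⟩, ht.1]

theorem stmt_16 (D Dj : Set E3) (hDbdd : Bornology.IsBounded D)
    (hsub : Dj ⊆ D) (hDjopen : IsOpen Dj) (hDjconn : IsConnected Dj)
    (tmin tmax : ℝ) (htmin : 0 ≤ tmin) (ht : tmin < tmax)
    (xhat : E3) (hx : ‖xhat‖ = 1)
    (c₀ : ℝ) (hc₀ : 0 < c₀)
    (S : E3 → ℝ → ℝ)
    (hSmeas : Measurable (fun p : E3 × ℝ => S p.1 p.2))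
    (hSbdd : ∃ M : ℝ, ∀ y ∈ D, ∀ t ∈ Set.Icc tmin tmax, S y t ≤ M)
    -- `S ≥ c₀ > 0` on `D̄ × [t_min, t_max]`:
    (hSpos : ∀ y ∈ closure D, ∀ t ∈ Set.Icc tmin tmax, c₀ ≤ S y t)
    (g : ℝ → ℝ)
    -- `g_j(ξ) = ∫_{t_min}^{t_max} ∫_{{y ∈ D_j : x̂·y = ξ+t}} S(y,t) ds(y) dt`,
    -- with `ds` the 2-dimensional (Hausdorff) surface measure:
    (hg : ∀ ξ : ℝ, g ξ = ∫ t in Set.Ioo tmin tmax,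
      ∫ y in {y ∈ Dj | ⟪xhat, y⟫ = ξ + t}, S y t ∂(μH[2])) :
    (∀ ξ ∈ Set.Ioo (sInf ((fun y => ⟪xhat, y⟫) '' Dj) - tmax)
        (sSup ((fun y => ⟪xhat, y⟫) '' Dj) - tmin), 0 < g ξ) ∧
    (∀ ξ : ℝ, ξ ∉ Set.Icc (sInf ((fun y => ⟪xhat, y⟫) '' Dj) - tmax)
        (sSup ((fun y => ⟪xhat, y⟫) '' Dj) - tmin) → g ξ = 0) :=
  stmt_16_general D Dj hDbdd hsub hDjopen hDjconn tmin tmax ht xhat hx c₀ hc₀ S hSmeas hSbdd hSpos g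
    hg
end
end
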